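/- arXiv:1510.03010 — 2 statements merged into one kernel-verified Lean document; each statement's English description precedes it below -/
import Mathlib

section
/- Suppose smooth functions u(x,t) and ρ(x,t), with u - u_{xx} - a nonvanishing, satisfy (ln ρ)_t + u (ln ρ)_x = -u_x and ((ln ρ)_t + u(ln ρ)_x)_x + u - a = -aρ^3. Then (∂_t + u∂_x) ln(u - u_{xx} - a) = -3 u_x, i.e. u satisfies the Degasperis-Procesi equation m_t + u m_x + 3 m u_x = 0 with m = u - u_{xx} - a. -/
/-- Partial derivative with respect to the first variable (`x`). -/
noncomputable def pdx (f : ℝ → ℝ → ℝ) : ℝ → ℝ → ℝ :=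
  fun x t => deriv (fun x' => f x' t) x

/-- Partial derivative with respect to the second variable (`t`). -/
noncomputable def pdt (f : ℝ → ℝ → ℝ) : ℝ → ℝ → ℝ :=
  fun x t => deriv (fun t' => f x t') t

/-- If `(∂_t + u∂_x) ln ρ = -u_x` and `((∂_t + u∂_x) ln ρ)_x + u - a = -aρ³`,
then `u` satisfies the Degasperis-Procesi equation
`(∂_t + u∂_x) ln(u - u_{xx} - a) = -3 u_x`. -/
theorem stmt6 (a : ℝ) (ha : a ≠ 0) (u ρ : ℝ → ℝ → ℝ)
    (hu : ContDiff ℝ (⊤ : ℕ∞) fun q : ℝ × ℝ => u q.1 q.2)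
    (hρ : ContDiff ℝ (⊤ : ℕ∞) fun q : ℝ × ℝ => ρ q.1 q.2)
    (hρpos : ∀ x t, 0 < ρ x t)
    (hm : ∀ x t, u x t - pdx (pdx u) x t - a ≠ 0)
    (heq1 : ∀ x t,
      pdt (fun x t => Real.log (ρ x t)) x t
        + u x t * pdx (fun x t => Real.log (ρ x t)) x t = - pdx u x t)
    (heq2 : ∀ x t,
      pdx (fun x t => pdt (fun x t => Real.log (ρ x t)) x t
          + u x t * pdx (fun x t => Real.log (ρ x t)) x t) x t
        + u x t - a = -a * (ρ x t) ^ 3) :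
    ∀ x t,
      pdt (fun x t => Real.log (u x t - pdx (pdx u) x t - a)) x t
        + u x t * pdx (fun x t => Real.log (u x t - pdx (pdx u) x t - a)) x t
      = -3 * pdx u x t := by
  -- derivatives of ρ
  have hρx : ∀ x t, HasDerivAt (fun x' => ρ x' t) (pdx ρ x t) x := by
    intro x t
    have hd : DifferentiableAt ℝ (fun x' => ρ x' t) x := by
      have : (fun x' => ρ x' t) = (fun q : ℝ × ℝ => ρ q.1 q.2) ∘ (fun x' => (x', t)) := rfl
      rw [this]
      exact ((hρ.differentiable (by simp) _).comp _
        (differentiableAt_id.prodMk (differentiableAt_const t)))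
    exact hd.hasDerivAt
  have hρt : ∀ x t, HasDerivAt (fun t' => ρ x t') (pdt ρ x t) t := by
    intro x t
    have hd : DifferentiableAt ℝ (fun t' => ρ x t') t := by
      have : (fun t' => ρ x t') = (fun q : ℝ × ℝ => ρ q.1 q.2) ∘ (fun t' => (x, t')) := rfl
      rw [this]
      exact ((hρ.differentiable (by simp) _).comp _
        ((differentiableAt_const x).prodMk differentiableAt_id))
    exact hd.hasDerivAt
  have hρne : ∀ x t, ρ x t ≠ 0 := fun x t => (hρpos x t).ne'
  -- key : m = -a ρ³
  have key : ∀ x t, u x t - pdx (pdx u) x t - a = -a * ρ x t ^ 3 := by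
    intro x t
    have h2 := heq2 x t
    have hfun : (fun x' => pdt (fun x t => Real.log (ρ x t)) x' t
        + u x' t * pdx (fun x t => Real.log (ρ x t)) x' t)
        = fun x' => -(pdx u x' t) := by
      funext x'
      simpa using heq1 x' t
    have : pdx (fun x t => pdt (fun x t => Real.log (ρ x t)) x t
        + u x t * pdx (fun x t => Real.log (ρ x t)) x t) x t
        = -(pdx (pdx u) x t) := by
      show deriv _ x = _
      rw [hfun]
      rw [deriv.fun_neg]
      rfl
    rw [this] at h2
    linarith
  -- rewrite log m = log (-a ρ³)
  have hlogeq : (fun x t => Real.log (u x t - pdx (pdx u) x t - a))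
      = fun x t => Real.log (-a * ρ x t ^ 3) := by
    funext x t; rw [key x t]
  intro x t
  have hMne : -a * ρ x t ^ 3 ≠ 0 := by rw [← key x t]; exact hm x t
  -- derivative of log(-aρ³) in x
  have hgx : HasDerivAt (fun x' => -a * ρ x' t ^ 3)
      (-a * (3 * ρ x t ^ 2 * pdx ρ x t)) x := by
    simpa using (((hρx x t).pow 3).const_mul (-a))
  have hgt : HasDerivAt (fun t' => -a * ρ x t' ^ 3)
      (-a * (3 * ρ x t ^ 2 * pdt ρ x t)) t := by
    simpa using (((hρt x t).pow 3).const_mul (-a))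
  have hlx : pdx (fun x t => Real.log (-a * ρ x t ^ 3)) x t
      = (-a * (3 * ρ x t ^ 2 * pdx ρ x t)) / (-a * ρ x t ^ 3) :=
    (hgx.log hMne).deriv
  have hlt : pdt (fun x t => Real.log (-a * ρ x t ^ 3)) x t
      = (-a * (3 * ρ x t ^ 2 * pdt ρ x t)) / (-a * ρ x t ^ 3) :=
    (hgt.log hMne).deriv
  -- derivatives of log ρ
  have hlρx : pdx (fun x t => Real.log (ρ x t)) x t = pdx ρ x t / ρ x t :=
    ((hρx x t).log (hρne x t)).deriv
  have hlρt : pdt (fun x t => Real.log (ρ x t)) x t = pdt ρ x t / ρ x t :=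
    ((hρt x t).log (hρne x t)).deriv
  have h1 := heq1 x t
  rw [hlρx, hlρt] at h1
  rw [hlogeq, hlx, hlt]
  have hρ3 : ρ x t ^ 3 ≠ 0 := pow_ne_zero 3 (hρne x t)
  have e1 : -a * (3 * ρ x t ^ 2 * pdt ρ x t) / (-a * ρ x t ^ 3)
      = 3 * (pdt ρ x t / ρ x t) := by field_simp [hρne x t]
  have e2 : -a * (3 * ρ x t ^ 2 * pdx ρ x t) / (-a * ρ x t ^ 3)
      = 3 * (pdx ρ x t / ρ x t) := by field_simp [hρne x t]
  rw [e1, e2]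
  linear_combination 3 * h1
end

section
/- For complex numbers p_1, p_2, p_3, p_4 (pairwise distinct, p_i + p_j ≠ 0) and antisymmetric pfaffian entries given by (i,j) = c_{ij} + ((p_i-p_j)/(p_i+p_j)) φ_i φ_j with c_{14} = c_{23} = 1 and all other c_{ij} = 0 (for i<j), the 4×4 Pfaffian equals Pf(1,2,3,4) = ((p_1-p_2)(p_3-p_4))/((p_1+p_2)(p_3+p_4)) φ_1φ_2φ_3φ_4 - ((p_1-p_3)(p_2-p_4))/((p_1+p_3)(p_2+p_4)) φ_1φ_2φ_3φ_4 + (1 + ((p_1-p_4)/(p_1+p_4))φ_1φ_4)(1 + ((p_2-p_3)/(p_2+p_3))φ_2φ_3), and this equals 1 + e^{γ_1}φ_1φ_4 + e^{γ_2}φ_2φ_3 + b_{12} e^{γ_1+γ_2} φ_1φ_2φ_3φ_4, where e^{γ_1} = (p_1-p_4)/(p_1+p_4), e^{γ_2} = (p_2-p_3)/(p_2+p_3), and b_{12} = ((p_1-p_2)(p_1-p_3)(p_4-p_2)(p_4-p_3))/((p_1+p_2)(p_1+p_3)(p_4+p_2)(p_4+p_3)). -/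
/-!
The Pfaffian of a skew-symmetric `4 × 4` matrix is the signed sum `(1,2)(3,4) - (1,3)(2,4) +
(1,4)(2,3)` over the three perfect matchings of `{1,2,3,4}`. The constants `c` only enter through
`(1,4)` and `(2,3)`, so expanding gives `1 + e^{γ₁} φ₁φ₄ + e^{γ₂} φ₂φ₃` plus `φ₁φ₂φ₃φ₄` times the
Pfaffian of the Schur matrix `((p_i - p_j)/(p_i + p_j))`. By Schur's Pfaffian identity the latter is
`∏_{i<j} (p_i - p_j)/(p_i + p_j) = b₁₂ e^{γ₁+γ₂}`.
-/

/-- The Pfaffian of a `2n × 2n` matrix, defined by the sum over permutations. -/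
noncomputable def pf {n : ℕ} (A : Matrix (Fin (2 * n)) (Fin (2 * n)) ℂ) : ℂ :=
  (1 / ((2 : ℂ) ^ n * (Nat.factorial n : ℂ))) *
    ∑ σ : Equiv.Perm (Fin (2 * n)),
      ((Equiv.Perm.sign σ : ℤ) : ℂ) *
        ∏ i : Fin n,
          A (σ ⟨2 * (i : ℕ), by have := i.2; omega⟩)
            (σ ⟨2 * (i : ℕ) + 1, by have := i.2; omega⟩)

theorem pf_fin_four (A : Matrix (Fin (2 * 2)) (Fin (2 * 2)) ℂ) (hA : ∀ i j, A j i = -A i j) :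
    pf A = A 0 1 * A 2 3 - A 0 2 * A 1 3 + A 0 3 * A 1 2 := by
  -- Indices as iterated `Fin.succ`, so that `decomposeFin_symm_apply_succ` evaluates `σ k`.
  have pairs : ∀ σ : Equiv.Perm (Fin (2 * 2)),
      ∏ i : Fin 2, A (σ ⟨2 * i, by omega⟩) (σ ⟨2 * i + 1, by omega⟩) =
        A (σ 0) (σ (Fin.succ 0)) *
          A (σ (Fin.succ (Fin.succ 0))) (σ (Fin.succ (Fin.succ (Fin.succ 0)))) :=
    fun σ => Fin.prod_univ_two _
  simp only [pf, pairs, Finset.univ_perm_fin_succ, Finset.sum_map, ← Finset.univ_product_univ,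
    Finset.sum_product, Equiv.toEmbedding_apply, Fin.sum_univ_succ, Fintype.sum_unique,
    Equiv.Perm.decomposeFin_symm_apply_zero, Equiv.Perm.decomposeFin_symm_apply_succ,
    Equiv.Perm.decomposeFin.symm_sign]
  simp [Equiv.swap_apply_def, hA 0 1, hA 0 2, hA 0 3, hA 1 2, hA 1 3, hA 2 3]
  ring

theorem apply_swap_eq_neg_of_eq_ite {ι R : Type*} [LinearOrder ι] [AddGroup R]
    {A : Matrix ι ι R} (f : ι → ι → R)
    (hA : ∀ i j, A i j = if i < j then f i j else if j < i then -f j i else 0) (i j : ι) :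
    A j i = -A i j := by
  rw [hA, hA]
  rcases lt_trichotomy i j with h | rfl | h
  · simp [h, h.not_gt]
  · simp
  · simp [h, h.not_gt]

theorem schur_pfaffian_four {K : Type*} [Field K] {a b c d : K} (hab : a + b ≠ 0)
    (hac : a + c ≠ 0) (had : a + d ≠ 0) (hbc : b + c ≠ 0) (hbd : b + d ≠ 0) (hcd : c + d ≠ 0) :
    (a - b) / (a + b) * ((c - d) / (c + d)) - (a - c) / (a + c) * ((b - d) / (b + d))
        + (a - d) / (a + d) * ((b - c) / (b + c)) =
      (a - b) * (a - c) * (d - b) * (d - c) / ((a + b) * (a + c) * (d + b) * (d + c))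
        * ((a - d) / (a + d) * ((b - c) / (b + c))) := by
  rw [add_comm d b, add_comm d c]
  field_simp
  ring

theorem stmt19_general (p φ : Fin (2 * 2) → ℂ)
    (hsum : ∀ i j, i ≠ j → p i + p j ≠ 0)
    (c : Fin (2 * 2) → Fin (2 * 2) → ℂ)
    (hc : ∀ i j, c i j =
      if (i = 0 ∧ j = 3) ∨ (i = 1 ∧ j = 2) then 1 else 0)
    (A : Matrix (Fin (2 * 2)) (Fin (2 * 2)) ℂ)
    (hA : ∀ i j, A i j =
      if i < j then c i j + ((p i - p j) / (p i + p j)) * φ i * φ j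
      else if j < i then -(c j i + ((p j - p i) / (p j + p i)) * φ j * φ i)
      else 0) :
    pf A = ((p 0 - p 1) * (p 2 - p 3)) / ((p 0 + p 1) * (p 2 + p 3))
            * (φ 0 * φ 1 * φ 2 * φ 3)
          - ((p 0 - p 2) * (p 1 - p 3)) / ((p 0 + p 2) * (p 1 + p 3))
            * (φ 0 * φ 1 * φ 2 * φ 3)
          + (1 + ((p 0 - p 3) / (p 0 + p 3)) * φ 0 * φ 3)
            * (1 + ((p 1 - p 2) / (p 1 + p 2)) * φ 1 * φ 2)
    ∧ pf A = 1 + ((p 0 - p 3) / (p 0 + p 3)) * (φ 0 * φ 3)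
          + ((p 1 - p 2) / (p 1 + p 2)) * (φ 1 * φ 2)
          + (((p 0 - p 1) * (p 0 - p 2) * (p 3 - p 1) * (p 3 - p 2))
              / ((p 0 + p 1) * (p 0 + p 2) * (p 3 + p 1) * (p 3 + p 2)))
            * (((p 0 - p 3) / (p 0 + p 3)) * ((p 1 - p 2) / (p 1 + p 2)))
            * (φ 0 * φ 1 * φ 2 * φ 3) := by
  have schur := schur_pfaffian_four (hsum 0 1 (by decide)) (hsum 0 2 (by decide))
    (hsum 0 3 (by decide)) (hsum 1 2 (by decide)) (hsum 1 3 (by decide)) (hsum 2 3 (by decide))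
  rw [pf_fin_four A (apply_swap_eq_neg_of_eq_ite _ hA)]
  simp +decide only [hA, hc, if_true, if_false, zero_add]
  constructor
  · rw [mul_div_mul_comm, mul_div_mul_comm]
    ring
  · linear_combination (φ 0 * φ 1 * φ 2 * φ 3) * schur

/-- The two-soliton tau-function structure: the `4×4` Pfaffian with entries
`(i,j) = c_{ij} + ((p_i-p_j)/(p_i+p_j)) φ_i φ_j`, `c_{14} = c_{23} = 1` and all
other `c_{ij} = 0`, equals
`(1,2)(3,4) - (1,3)(2,4) + (1,4)(2,3)`, i.e.
`1 + e^{γ₁} φ₁φ₄ + e^{γ₂} φ₂φ₃ + b₁₂ e^{γ₁+γ₂} φ₁φ₂φ₃φ₄`. -/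
theorem stmt19 (p φ : Fin (2 * 2) → ℂ)
    (hdist : ∀ i j, i ≠ j → p i ≠ p j)
    (hsum : ∀ i j, i ≠ j → p i + p j ≠ 0)
    (hφ : ∀ i, φ i ≠ 0)
    (c : Fin (2 * 2) → Fin (2 * 2) → ℂ)
    (hc : ∀ i j, c i j =
      if (i = 0 ∧ j = 3) ∨ (i = 1 ∧ j = 2) then 1 else 0)
    (A : Matrix (Fin (2 * 2)) (Fin (2 * 2)) ℂ)
    (hA : ∀ i j, A i j =
      if i < j then c i j + ((p i - p j) / (p i + p j)) * φ i * φ j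
      else if j < i then -(c j i + ((p j - p i) / (p j + p i)) * φ j * φ i)
      else 0) :
    pf A = ((p 0 - p 1) * (p 2 - p 3)) / ((p 0 + p 1) * (p 2 + p 3))
            * (φ 0 * φ 1 * φ 2 * φ 3)
          - ((p 0 - p 2) * (p 1 - p 3)) / ((p 0 + p 2) * (p 1 + p 3))
            * (φ 0 * φ 1 * φ 2 * φ 3)
          + (1 + ((p 0 - p 3) / (p 0 + p 3)) * φ 0 * φ 3)
            * (1 + ((p 1 - p 2) / (p 1 + p 2)) * φ 1 * φ 2)
    ∧ pf A = 1 + ((p 0 - p 3) / (p 0 + p 3)) * (φ 0 * φ 3)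
          + ((p 1 - p 2) / (p 1 + p 2)) * (φ 1 * φ 2)
          + (((p 0 - p 1) * (p 0 - p 2) * (p 3 - p 1) * (p 3 - p 2))
              / ((p 0 + p 1) * (p 0 + p 2) * (p 3 + p 1) * (p 3 + p 2)))
            * (((p 0 - p 3) / (p 0 + p 3)) * ((p 1 - p 2) / (p 1 + p 2)))
            * (φ 0 * φ 1 * φ 2 * φ 3) :=
  stmt19_general p φ hsum c hc A hA
end
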